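/- Let T be a set of disjoint c-gap increasing subsequences of f of length k₀ satisfying the greedy interleaving property. Fix ℓ ∈ [n] and scales t₁ ≥ t₂ + 1 + log₂(3) + log₂(c+1). If (i₁,…,i_{k₀}) is at scale t₁ and is (1/3)-cut at c with slack by ℓ, and (j₁,…,j_{k₀}) is at scale t₂ and is (1/3)-cut at c with slack by ℓ, then f(j_{c+1}) < f(i_{c+1}). -/

import Mathlib

/-!
The gap `J_{c+1} - J_c` is at most `2^(t₂+1)`, while the gap `I_{c+1} - I_c` is at least
`2^t₁ ≥ 3 (c+1) 2^(t₂+1)`. Since `ℓ` cuts both gaps with slack `1/3`, the short gap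
`[J_c, J_{c+1}]` lies strictly inside the long gap `[I_c, I_{c+1}]`, at distance more than
`c (J_{c+1} - J_c)` from its left end. No gap of `J` exceeds the one after `J_c`, so
`J_0 ≥ J_c - c (J_{c+1} - J_c) > I_c ≥ I_0`. Thus `I_0 < J_0`, `I_c < J_c` and `J_{c+1} < I_{c+1}`,
and the greedy interleaving property gives `f(J_{c+1}) < f(I_{c+1})`.
-/

def CutsWithSlack (ℓ x y : ℝ) : Prop :=
  x + (y - x) / 3 ≤ ℓ ∧ ℓ ≤ y - (y - x) / 3

lemma three_mul_succ_mul_two_pow_le {c t₁ t₂ : ℕ}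
    (h : (t₂ : ℝ) + 1 + Real.logb 2 3 + Real.logb 2 (c + 1) ≤ t₁) :
    3 * (c + 1) * 2 ^ (t₂ + 1) ≤ 2 ^ t₁ := by
  have key : (2 : ℝ) ^ ((t₂ : ℝ) + 1 + Real.logb 2 3 + Real.logb 2 (c + 1)) ≤ 2 ^ (t₁ : ℝ) :=
    Real.rpow_le_rpow_of_exponent_le one_le_two h
  rw [Real.rpow_add two_pos, Real.rpow_add two_pos, Real.rpow_logb two_pos (by norm_num)
    (by norm_num), Real.rpow_logb two_pos (by norm_num) (by positivity)] at key
  have : (2 : ℝ) ^ ((t₂ : ℝ) + 1) = 2 ^ (t₂ + 1) := by exact_mod_cast Real.rpow_natCast 2 (t₂ + 1)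
  rw [this, Real.rpow_natCast] at key
  exact_mod_cast (by linarith : (3 : ℝ) * (c + 1) * 2 ^ (t₂ + 1) ≤ 2 ^ t₁)

lemma le_head_add_mul_of_gaps_le {k g : ℕ} (s : Fin k → ℕ)
    (hgap : ∀ b (hb : b + 1 < k), s ⟨b + 1, hb⟩ - s ⟨b, Nat.lt_of_succ_lt hb⟩ ≤ g) :
    ∀ m (hm : m < k), s ⟨m, hm⟩ ≤ s ⟨0, Nat.zero_lt_of_lt hm⟩ + m * g
  | 0, _ => by simp
  | m + 1, hm => by
    have := hgap m hm
    have := le_head_add_mul_of_gaps_le s hgap m (by omega)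
    rw [add_one_mul]
    omega

lemma add_mul_lt_and_lt_of_cutsWithSlack {ℓ a A b B c : ℕ} (hbB : b < B)
    (hlong : 3 * (c + 1) * (B - b) ≤ A - a)
    (hcutA : CutsWithSlack ℓ a A) (hcutB : CutsWithSlack ℓ b B) :
    a + c * (B - b) < b ∧ B < A := by
  obtain ⟨haℓ, hℓA⟩ := hcutA
  obtain ⟨hbℓ, hℓB⟩ := hcutB
  have haA : a ≤ A := by
    by_contra! h
    have : (A : ℝ) < a := by exact_mod_cast h
    linarith
  have hlongR : 3 * ((c : ℝ) + 1) * ((B : ℝ) - b) ≤ (A : ℝ) - a := by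
    have := (Nat.cast_le (α := ℝ)).mpr hlong
    push_cast [Nat.cast_sub hbB.le, Nat.cast_sub haA] at this
    exact this
  have hBb : (0 : ℝ) < (B : ℝ) - b := by
    have : (b : ℝ) < B := by exact_mod_cast hbB
    linarith
  have hcBb : (0 : ℝ) ≤ c * ((B : ℝ) - b) := by positivity
  constructor
  · suffices (a : ℝ) + c * ((B : ℝ) - b) < b by
      push_cast [← Nat.cast_sub hbB.le] at this
      exact_mod_cast this
    linarith
  · suffices (B : ℝ) < A by exact_mod_cast this
    linarith

/-- If two `c`-gap increasing subsequences from a greedily-interleaved family are both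
`(1/3)`-cut at `c` with slack by `ℓ`, at scales `t₁` and `t₂` with
`t₁ ≥ t₂ + 1 + log₂ 3 + log₂ (c+1)`, then `f(j_{c+1}) < f(i_{c+1})`. -/
theorem stmt17 (n k₀ c : ℕ) (hc : c + 1 < k₀) (f : Fin n → ℝ)
    (T : Finset (Fin k₀ → Fin n))
    (hincr : ∀ s ∈ T, StrictMono s ∧ StrictMono (f ∘ s))
    -- each element of T is a c-gap subsequence: c is the least index maximizing the gap
    (hgap : ∀ s ∈ T, ∀ b, ∀ hb : b + 1 < k₀,
      (s ⟨b + 1, hb⟩ : ℕ) - (s ⟨b, by omega⟩ : ℕ) ≤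
      (s ⟨c + 1, hc⟩ : ℕ) - (s ⟨c, by omega⟩ : ℕ))
    -- greedy interleaving property
    (hinter : ∀ i ∈ T, ∀ j ∈ T, ∀ ℓ' : ℕ, ∀ hℓ' : ℓ' + 1 < k₀,
      i ⟨0, by omega⟩ < j ⟨0, by omega⟩ →
      i ⟨ℓ', by omega⟩ < j ⟨ℓ', by omega⟩ →
      j ⟨ℓ' + 1, hℓ'⟩ < i ⟨ℓ' + 1, hℓ'⟩ →
      f (j ⟨ℓ' + 1, hℓ'⟩) < f (i ⟨ℓ' + 1, hℓ'⟩))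
    (ℓ t₁ t₂ : ℕ)
    (hsep : (t₂ : ℝ) + 1 + Real.logb 2 3 + Real.logb 2 (c + 1) ≤ t₁)
    (I J : Fin k₀ → Fin n) (hI : I ∈ T) (hJ : J ∈ T)
    (hscaleI : 2 ^ t₁ ≤ (I ⟨c + 1, hc⟩ : ℕ) - (I ⟨c, by omega⟩ : ℕ) ∧
      (I ⟨c + 1, hc⟩ : ℕ) - (I ⟨c, by omega⟩ : ℕ) ≤ 2 ^ (t₁ + 1))
    (hcutI : ((I ⟨c, by omega⟩ : ℕ) : ℝ) +
        (((I ⟨c + 1, hc⟩ : ℕ) : ℝ) - ((I ⟨c, by omega⟩ : ℕ) : ℝ)) / 3 ≤ ℓ ∧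
      (ℓ : ℝ) ≤ ((I ⟨c + 1, hc⟩ : ℕ) : ℝ) -
        (((I ⟨c + 1, hc⟩ : ℕ) : ℝ) - ((I ⟨c, by omega⟩ : ℕ) : ℝ)) / 3)
    (hscaleJ : 2 ^ t₂ ≤ (J ⟨c + 1, hc⟩ : ℕ) - (J ⟨c, by omega⟩ : ℕ) ∧
      (J ⟨c + 1, hc⟩ : ℕ) - (J ⟨c, by omega⟩ : ℕ) ≤ 2 ^ (t₂ + 1))
    (hcutJ : ((J ⟨c, by omega⟩ : ℕ) : ℝ) +
        (((J ⟨c + 1, hc⟩ : ℕ) : ℝ) - ((J ⟨c, by omega⟩ : ℕ) : ℝ)) / 3 ≤ ℓ ∧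
      (ℓ : ℝ) ≤ ((J ⟨c + 1, hc⟩ : ℕ) : ℝ) -
        (((J ⟨c + 1, hc⟩ : ℕ) : ℝ) - ((J ⟨c, by omega⟩ : ℕ) : ℝ)) / 3) :
    f (J ⟨c + 1, hc⟩) < f (I ⟨c + 1, hc⟩) := by
  have hJhead := le_head_add_mul_of_gaps_le (fun a ↦ (J a : ℕ))
    (g := (J ⟨c + 1, hc⟩ : ℕ) - J ⟨c, by omega⟩) (hgap J hJ) c (by omega)
  have hJstep : J ⟨c, by omega⟩ < J ⟨c + 1, hc⟩ := (hincr J hJ).1 (Fin.mk_lt_mk.mpr c.lt_succ_self)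
  have hIhead : (I ⟨0, by omega⟩ : ℕ) ≤ I ⟨c, by omega⟩ :=
    (hincr I hI).1.monotone (Fin.mk_le_mk.mpr c.zero_le)
  have hlong : 3 * (c + 1) * ((J ⟨c + 1, hc⟩ : ℕ) - J ⟨c, by omega⟩) ≤
      (I ⟨c + 1, hc⟩ : ℕ) - I ⟨c, by omega⟩ :=
    calc _ ≤ 3 * (c + 1) * 2 ^ (t₂ + 1) := Nat.mul_le_mul_left _ hscaleJ.2
      _ ≤ 2 ^ t₁ := three_mul_succ_mul_two_pow_le hsep
      _ ≤ _ := hscaleI.1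
  obtain ⟨hIJ, hJI⟩ := add_mul_lt_and_lt_of_cutsWithSlack hJstep hlong hcutI hcutJ
  exact hinter I hI J hJ c hc (Fin.lt_def.mpr (by omega)) (Fin.lt_def.mpr (by omega)) hJI
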